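/- Let G be an all-small (dicotic) game. If the atomic weight of G is at least 2, then G is a Left win under normal play (Left wins moving first or second). If the atomic weight is at least 1, then Left wins moving first. Symmetrically, if the atomic weight is at most −2 then G is a Right win, and if at most −1 then Right wins moving first. -/

import Mathlib

/-! Combinatorial game theory (`SetTheory.PGame`, `Nimber`) is no longer in Mathlib; the
definitions the statement uses are reproduced below with their Mathlib (December 2024) meaning. -/

section PGameDefs

universe u

namespace SetTheory

/-- Pre-games, as in Mathlib (December 2024). -/
inductive PGame : Type (u + 1)
  | mk : ∀ α β : Type u, (α → PGame) → (β → PGame) → PGame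

namespace PGame

/-- The indexing type for allowable moves by Left. -/
def LeftMoves : PGame → Type u
  | mk l _ _ _ => l

/-- The indexing type for allowable moves by Right. -/
def RightMoves : PGame → Type u
  | mk _ r _ _ => r

/-- The new game after Left makes an allowed move. -/
def moveLeft : ∀ g : PGame, LeftMoves g → PGame
  | mk _l _ L _ => L

/-- The new game after Right makes an allowed move. -/
def moveRight : ∀ g : PGame, RightMoves g → PGame
  | mk _ _r _ R => R

/-- `IsOption x y` means that `x` is either a left or right option for `y`. -/
inductive IsOption : PGame → PGame → Prop
  | moveLeft {x : PGame} (i : x.LeftMoves) : IsOption (x.moveLeft i) x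
  | moveRight {x : PGame} (i : x.RightMoves) : IsOption (x.moveRight i) x

theorem wf_isOption : WellFounded IsOption :=
  ⟨fun x => by
    induction x with
    | mk l r L R ihl ihr =>
      exact Acc.intro _ fun y h => by
        cases h with
        | moveLeft i => exact ihl i
        | moveRight j => exact ihr j⟩

/-- `Subsequent x y` says that `x` can be obtained by playing some nonempty sequence of moves
from `y`. -/
def Subsequent : PGame → PGame → Prop :=
  Relation.TransGen IsOption

theorem wf_subsequent : WellFounded Subsequent :=
  wf_isOption.transGen

instance : WellFoundedRelation PGame :=
  ⟨_, wf_subsequent⟩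

theorem Subsequent.moveLeft (x : PGame) (i : x.LeftMoves) : Subsequent (x.moveLeft i) x :=
  Relation.TransGen.single (IsOption.moveLeft i)

theorem Subsequent.moveRight (x : PGame) (j : x.RightMoves) : Subsequent (x.moveRight j) x :=
  Relation.TransGen.single (IsOption.moveRight j)

/-- The pre-game `Zero` is defined by `0 = { | }`. -/
instance : Zero PGame :=
  ⟨⟨PEmpty, PEmpty, PEmpty.elim, PEmpty.elim⟩⟩

/-- The less or equal relation on pre-games. -/
instance le : LE PGame :=
  ⟨Sym2.GameAdd.recursion wf_isOption fun x y le =>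
      (∀ i, ¬le y (x.moveLeft i) (Sym2.GameAdd.snd_fst <| IsOption.moveLeft i)) ∧
        ∀ j, ¬le (y.moveRight j) x (Sym2.GameAdd.fst_snd <| IsOption.moveRight j)⟩

/-- The less or fuzzy relation on pre-games. -/
def LF (x y : PGame) : Prop :=
  ¬y ≤ x

infixl:50 " ⧏ " => PGame.LF

instance : LT PGame :=
  ⟨fun x y => x ≤ y ∧ x ⧏ y⟩

/-- The negation of `{L | R}` is `{-R | -L}`. -/
def neg : PGame → PGame
  | ⟨l, r, L, R⟩ => ⟨r, l, fun i => neg (R i), fun i => neg (L i)⟩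

instance : Neg PGame :=
  ⟨neg⟩

/-- The sum of `x = {xL | xR}` and `y = {yL | yR}` is `{xL + y, x + yL | xR + y, x + yR}`. -/
def add : PGame.{u} → PGame.{u} → PGame.{u}
  | mk xl xr xL xR, mk yl yr yL yR =>
    ⟨xl ⊕ yl, xr ⊕ yr,
      Sum.elim (fun i => add (xL i) (mk yl yr yL yR)) (fun i => add (mk xl xr xL xR) (yL i)),
      Sum.elim (fun i => add (xR i) (mk yl yr yL yR)) (fun i => add (mk xl xr xL xR) (yR i))⟩
termination_by x y => (x, y)
decreasing_by all_goals first
  | exact Prod.Lex.left _ _ (Subsequent.moveLeft (mk _ _ _ _) _)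
  | exact Prod.Lex.left _ _ (Subsequent.moveRight (mk _ _ _ _) _)
  | exact Prod.Lex.right _ (Subsequent.moveLeft (mk _ _ _ _) _)
  | exact Prod.Lex.right _ (Subsequent.moveRight (mk _ _ _ _) _)

instance : Add PGame.{u} :=
  ⟨add⟩

instance : Sub PGame :=
  ⟨fun x y => x + -y⟩

/-- The pre-game `star`, which is fuzzy with zero. -/
def star : PGame.{u} :=
  ⟨PUnit, PUnit, fun _ => 0, fun _ => 0⟩

/-- The definition of single-heap nim: `nim o = {nim o' | nim o'}` over `o' < o`. -/
noncomputable def nim (o : Ordinal.{u}) : PGame.{u} :=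
  ⟨o.ToType, o.ToType,
    fun x => nim (Ordinal.ToType.toOrd x).1,
    fun x => nim (Ordinal.ToType.toOrd x).1⟩
termination_by o
decreasing_by all_goals exact (Ordinal.ToType.toOrd x).2

end PGame

end SetTheory

/-- Nimbers: a type synonym for ordinals, with the same order (December 2024 Mathlib). -/
def Nimber : Type (u + 1) :=
  Ordinal.{u}

instance : One Nimber :=
  inferInstanceAs (One Ordinal)

noncomputable instance : InfSet Nimber :=
  inferInstanceAs (InfSet Ordinal)

end PGameDefs

open SetTheory PGame

universe u

/-- The four outcome classes of a combinatorial game. -/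
inductive Outcome : Type
  | L | N | P | R
deriving DecidableEq

/-- The partial order on outcomes: `R` least, `L` greatest, `N` and `P` incomparable. -/
def Outcome.leB : Outcome → Outcome → Bool
  | .R, _ => true
  | _, .L => true
  | .N, .N => true
  | .P, .P => true
  | _, _ => false

instance : PartialOrder Outcome where
  le a b := Outcome.leB a b = true
  le_refl a := by cases a <;> rfl
  le_trans a b c := by cases a <;> cases b <;> cases c <;> simp [Outcome.leB]
  le_antisymm a b := by cases a <;> cases b <;> simp [Outcome.leB]

/-- `misereWins true G` : Left, moving first, wins `G` under misère play;
`misereWins false G` : Right, moving first, wins `G` under misère play.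
(Under misère play, a player who cannot move wins.) -/
def misereWins : Bool → SetTheory.PGame.{u} → Prop
  | true, G => IsEmpty G.LeftMoves ∨ ∃ i, ¬ misereWins false (G.moveLeft i)
  | false, G => IsEmpty G.RightMoves ∨ ∃ j, ¬ misereWins true (G.moveRight j)
termination_by _ G => G
decreasing_by all_goals first
  | exact Subsequent.moveLeft _ _
  | exact Subsequent.moveRight _ _

/-- Build an outcome class from the propositions "Left moving first wins" and
"Right moving first wins". -/
noncomputable def outcomeOf (LF RF : Prop) : Outcome := by
  classical exact if LF then (if RF then .N else .L) else (if RF then .R else .P)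

/-- The normal-play outcome `o⁺(G)` of a game. -/
noncomputable def normalOutcome (G : PGame) : Outcome :=
  outcomeOf (¬ G ≤ 0) (¬ 0 ≤ G)

/-- The misère-play outcome `o⁻(G)` of a game. -/
noncomputable def misereOutcome (G : PGame) : Outcome :=
  outcomeOf (misereWins true G) (misereWins false G)

/-- The ordinal sum `G : H` of two games: either move in `G` (destroying the `H` part),
or move in `H` keeping the base `G`. -/
def ordinalSum (G : PGame.{u}) : PGame.{u} → PGame.{u}
  | H => PGame.mk (G.LeftMoves ⊕ H.LeftMoves) (G.RightMoves ⊕ H.RightMoves)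
      (Sum.elim G.moveLeft fun i => ordinalSum G (H.moveLeft i))
      (Sum.elim G.moveRight fun j => ordinalSum G (H.moveRight j))
termination_by H => H
decreasing_by all_goals first
  | exact Subsequent.moveLeft _ _
  | exact Subsequent.moveRight _ _

/-- The game `↑` (up) `= {0 | *}`. -/
def up : PGame.{u} := ⟨PUnit, PUnit, fun _ => 0, fun _ => star⟩

/-- `n` copies of `↑` added together. -/
def nUp : ℕ → PGame.{u}
  | 0 => 0
  | n + 1 => nUp n + up

/-- The integer multiple `w·↑`. -/
def upMul : ℤ → PGame.{u}
  | .ofNat k => nUp k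
  | .negSucc k => -(nUp (k + 1))

/-- Finite disjunctive sum of a family of games. -/
def psum : {k : ℕ} → (Fin k → PGame.{u}) → PGame.{u}
  | 0, _ => 0
  | k + 1, f => psum (fun i : Fin k => f i.castSucc) + f (Fin.last k)

/-- The superstar `{*x₁, …, *xₙ}`: the impartial game whose Left and Right options are
exactly the nimbers `*xᵢ`. -/
noncomputable def superstar {n : ℕ} (x : Fin n → ℕ) : PGame :=
  ⟨Fin n, Fin n, fun i => nim (x i), fun i => nim (x i)⟩

/-- The minimum excludant of a set of naturals. -/
noncomputable def setMex (S : Set ℕ) : ℕ := sInf {n | n ∉ S}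

/-- Iterated XOR (nim-sum) of a finite family of naturals. -/
def xorSum : {k : ℕ} → (Fin k → ℕ) → ℕ
  | 0, _ => 0
  | k + 1, f => xorSum (fun i : Fin k => f i.castSucc) ^^^ f (Fin.last k)

/-- A set of naturals is star-closed if it is closed under XOR with 1. -/
def StarClosedN (S : Set ℕ) : Prop := ∀ a ∈ S, a ^^^ 1 ∈ S

/-- `G` is all-small (dicotic): in every subposition, either both players can move
or neither can. -/
def AllSmall (G : PGame) : Prop :=
  (Nonempty G.LeftMoves ↔ Nonempty G.RightMoves) ∧
    ∀ p, Subsequent p G → (Nonempty p.LeftMoves ↔ Nonempty p.RightMoves)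

/-- `G` has (integer) atomic weight `w`, via the remote-star characterization:
for all sufficiently remote `N`, `*N + ↓ < G - w·↑ < *N + ↑`. -/
def HasIntAtomicWeight (G : PGame) (w : ℤ) : Prop :=
  ∃ N₀ : ℕ, ∀ N : ℕ, N₀ ≤ N →
    nim N + (-up) < G - upMul w ∧ G - upMul w < nim N + up

open Classical in
/-- The misère Grundy value of an (impartial) game: the mex of the misère Grundy values
of its options, except that the empty game has misère Grundy value `1`. -/
noncomputable def misereGrundy : PGame.{u} → Nimber.{u}
  | G =>
    if IsEmpty G.LeftMoves then 1
    else sInf (Set.range fun i => misereGrundy (G.moveLeft i))ᶜ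
termination_by G => G
decreasing_by all_goals first
  | exact Subsequent.moveLeft _ _
  | exact Subsequent.moveRight _ _

/-- A set of games closed under disjunctive sum and under taking subpositions. -/
def SClosed (A : Set PGame) : Prop :=
  (∀ G ∈ A, ∀ H ∈ A, G + H ∈ A) ∧ ∀ G ∈ A, ∀ G', Subsequent G' G → G' ∈ A

/-- `K` is an evil kernel of `A`: setting `G* = G` for `G ∈ K` and `G* = G + *` otherwise,
one has `o⁺(G) = o⁻(G*)` and `o⁻(G) = o⁺(G*)` for all `G ∈ A`. -/
def IsEvilKernel (A K : Set PGame) : Prop :=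
  K ⊆ A ∧ ∀ G ∈ A,
    (G ∈ K → normalOutcome G = misereOutcome G ∧ misereOutcome G = normalOutcome G) ∧
    (G ∉ K → normalOutcome G = misereOutcome (G + star) ∧
      misereOutcome G = normalOutcome (G + star))

/-- `(A, K)` is evilly normal: `A` is closed, `K` is an evil kernel of `A`, and
`G + H ∉ K ↔ (G ∉ K ∧ H ∉ K)` for all `G, H ∈ A`. -/
def EvillyNormal (A K : Set PGame) : Prop :=
  SClosed A ∧ IsEvilKernel A K ∧ ∀ G ∈ A, ∀ H ∈ A, (G + H ∉ K ↔ G ∉ K ∧ H ∉ K)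

/-- Normal-play equality of games: `G` and `H` have the same normal-play outcome in
every sum. -/
def NormalEq (G H : PGame) : Prop := ∀ X, normalOutcome (G + X) = normalOutcome (H + X)

namespace SetTheory
namespace PGame

theorem le_iff_forall_lf {x y : PGame.{u}} :
    x ≤ y ↔ (∀ i, x.moveLeft i ⧏ y) ∧ ∀ j, x ⧏ y.moveRight j := by
  unfold LE.le le
  simp only
  rw [Sym2.GameAdd.recursion_eq]
  rfl

theorem lf_iff_exists_le {x y : PGame.{u}} :
    x ⧏ y ↔ (∃ i, x ≤ y.moveLeft i) ∨ ∃ j, x.moveRight j ≤ y := by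
  show ¬ y ≤ x ↔ _
  rw [le_iff_forall_lf]
  simp only [LF, not_and_or, not_forall, not_not]

protected theorem not_le {x y : PGame.{u}} : ¬ x ≤ y ↔ y ⧏ x := Iff.rfl

theorem moveLeft_lf_of_le {x y : PGame.{u}} (h : x ≤ y) (i : x.LeftMoves) : x.moveLeft i ⧏ y :=
  (le_iff_forall_lf.1 h).1 i

theorem lf_moveRight_of_le {x y : PGame.{u}} (h : x ≤ y) (j : y.RightMoves) : x ⧏ y.moveRight j :=
  (le_iff_forall_lf.1 h).2 j

theorem lf_of_le_moveLeft {x y : PGame.{u}} {i : y.LeftMoves} (h : x ≤ y.moveLeft i) : x ⧏ y :=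
  lf_iff_exists_le.2 (Or.inl ⟨i, h⟩)

theorem lf_of_moveRight_le {x y : PGame.{u}} {j : x.RightMoves} (h : x.moveRight j ≤ y) : x ⧏ y :=
  lf_iff_exists_le.2 (Or.inr ⟨j, h⟩)

theorem le_of_forall_lf {x y : PGame.{u}} (h₁ : ∀ i, x.moveLeft i ⧏ y)
    (h₂ : ∀ j, x ⧏ y.moveRight j) : x ≤ y :=
  le_iff_forall_lf.2 ⟨h₁, h₂⟩

theorem pg_le_refl (x : PGame.{u}) : x ≤ x := by
  induction x with
  | mk xl xr xL xR IHl IHr =>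
    exact le_of_forall_lf (fun i => lf_of_le_moveLeft (i := i) (IHl i))
      (fun j => lf_of_moveRight_le (j := j) (IHr j))

theorem pg_le_trans_aux {x y z : PGame.{u}}
    (h₁ : ∀ {i}, y ≤ z → z ≤ x.moveLeft i → y ≤ x.moveLeft i)
    (h₂ : ∀ {j}, z.moveRight j ≤ x → x ≤ y → z.moveRight j ≤ y) (hxy : x ≤ y) (hyz : y ≤ z) :
    x ≤ z :=
  le_of_forall_lf (fun i h => (moveLeft_lf_of_le hxy i) (h₁ hyz h))
    fun j h => (lf_moveRight_of_le hyz j) (h₂ h hxy)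

theorem pg_le_trans_core : ∀ x y z : PGame.{u},
    (x ≤ y → y ≤ z → x ≤ z) ∧ (y ≤ z → z ≤ x → y ≤ x) ∧ (z ≤ x → x ≤ y → z ≤ y) := by
  intro x
  induction x with
  | mk xl xr xL xR IHxl IHxr =>
  intro y
  induction y with
  | mk yl yr yL yR IHyl IHyr =>
  intro z
  induction z with
  | mk zl zr zL zR IHzl IHzr =>
  exact ⟨pg_le_trans_aux (fun {i} => (IHxl i _ _).2.1) fun {j} => (IHzr j).2.2,
    pg_le_trans_aux (fun {i} => (IHyl i _).2.2) fun {j} => (IHxr j _ _).1,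
    pg_le_trans_aux (fun {i} => (IHzl i).1) fun {j} => (IHyr j _).2.1⟩

theorem pg_le_trans {x y z : PGame.{u}} (h₁ : x ≤ y) (h₂ : y ≤ z) : x ≤ z :=
  (pg_le_trans_core x y z).1 h₁ h₂

instance : Preorder PGame.{u} :=
  { (inferInstance : LE PGame.{u}), (inferInstance : LT PGame.{u}) with
    le_refl := pg_le_refl
    le_trans := fun _ _ _ => pg_le_trans
    lt_iff_le_not_ge := fun _ _ => Iff.rfl }

protected def Equiv (x y : PGame.{u}) : Prop := x ≤ y ∧ y ≤ x

theorem equiv_refl (x : PGame.{u}) : PGame.Equiv x x := ⟨le_rfl, le_rfl⟩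

protected theorem Equiv.symm {x y : PGame.{u}} (h : PGame.Equiv x y) : PGame.Equiv y x :=
  ⟨h.2, h.1⟩

protected theorem Equiv.trans {x y z : PGame.{u}} (h₁ : PGame.Equiv x y) (h₂ : PGame.Equiv y z) :
    PGame.Equiv x z :=
  ⟨le_trans h₁.1 h₂.1, le_trans h₂.2 h₁.2⟩

instance setoid : Setoid PGame.{u} :=
  ⟨PGame.Equiv, ⟨equiv_refl, fun h => h.symm, fun h₁ h₂ => h₁.trans h₂⟩⟩

theorem le_congr {x₁ y₁ x₂ y₂ : PGame.{u}} (hx : PGame.Equiv x₁ x₂) (hy : PGame.Equiv y₁ y₂) :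
    x₁ ≤ y₁ ↔ x₂ ≤ y₂ :=
  ⟨fun h => le_trans hx.2 (le_trans h hy.1), fun h => le_trans hx.1 (le_trans h hy.2)⟩

theorem lf_congr_right {x y₁ y₂ : PGame.{u}} (hy : PGame.Equiv y₁ y₂) : x ⧏ y₁ ↔ x ⧏ y₂ :=
  not_congr (le_congr hy (equiv_refl x))

theorem zero_le_lf {x : PGame.{u}} : 0 ≤ x ↔ ∀ j, 0 ⧏ x.moveRight j := by
  rw [le_iff_forall_lf]
  exact ⟨fun h => h.2, fun h => ⟨fun i => PEmpty.elim i, h⟩⟩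

theorem zero_lf_le {x : PGame.{u}} : 0 ⧏ x ↔ ∃ i, 0 ≤ x.moveLeft i := by
  rw [lf_iff_exists_le]
  exact ⟨fun h => h.elim id (fun ⟨j, _⟩ => PEmpty.elim j), Or.inl⟩

theorem star_fuzzy_zero : star.{u} ⧏ 0 ∧ 0 ⧏ star.{u} :=
  ⟨lf_of_moveRight_le (j := PUnit.unit) (le_refl (0 : PGame.{u})),
    lf_of_le_moveLeft (i := PUnit.unit) (le_refl (0 : PGame.{u}))⟩

theorem mk_add_mk (xl xr : Type u) (xL : xl → PGame.{u}) (xR : xr → PGame.{u})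
    (yl yr : Type u) (yL : yl → PGame.{u}) (yR : yr → PGame.{u}) :
    mk xl xr xL xR + mk yl yr yL yR = mk (xl ⊕ yl) (xr ⊕ yr)
      (Sum.elim (fun i => xL i + mk yl yr yL yR) (fun i => mk xl xr xL xR + yL i))
      (Sum.elim (fun i => xR i + mk yl yr yL yR) (fun i => mk xl xr xL xR + yR i)) := by
  show add _ _ = _
  rw [add]
  rfl

theorem add_moveLeft_cases {x y : PGame.{u}} (k : (x + y).LeftMoves) :
    (∃ i, (x + y).moveLeft k = x.moveLeft i + y) ∨ ∃ j, (x + y).moveLeft k = x + y.moveLeft j := by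
  revert k
  rcases x with ⟨xl, xr, xL, xR⟩
  rcases y with ⟨yl, yr, yL, yR⟩
  rw [mk_add_mk]
  rintro (i | j)
  · exact Or.inl ⟨i, rfl⟩
  · exact Or.inr ⟨j, rfl⟩

theorem add_moveRight_cases {x y : PGame.{u}} (k : (x + y).RightMoves) :
    (∃ i, (x + y).moveRight k = x.moveRight i + y) ∨
      ∃ j, (x + y).moveRight k = x + y.moveRight j := by
  revert k
  rcases x with ⟨xl, xr, xL, xR⟩
  rcases y with ⟨yl, yr, yL, yR⟩
  rw [mk_add_mk]
  rintro (i | j)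
  · exact Or.inl ⟨i, rfl⟩
  · exact Or.inr ⟨j, rfl⟩

theorem exists_add_moveLeft_inl (x y : PGame.{u}) (i : x.LeftMoves) :
    ∃ k, (x + y).moveLeft k = x.moveLeft i + y := by
  rcases x with ⟨xl, xr, xL, xR⟩
  rcases y with ⟨yl, yr, yL, yR⟩
  rw [mk_add_mk]
  exact ⟨Sum.inl i, rfl⟩

theorem exists_add_moveLeft_inr (x y : PGame.{u}) (j : y.LeftMoves) :
    ∃ k, (x + y).moveLeft k = x + y.moveLeft j := by
  rcases x with ⟨xl, xr, xL, xR⟩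
  rcases y with ⟨yl, yr, yL, yR⟩
  rw [mk_add_mk]
  exact ⟨Sum.inr j, rfl⟩

theorem exists_add_moveRight_inl (x y : PGame.{u}) (i : x.RightMoves) :
    ∃ k, (x + y).moveRight k = x.moveRight i + y := by
  rcases x with ⟨xl, xr, xL, xR⟩
  rcases y with ⟨yl, yr, yL, yR⟩
  rw [mk_add_mk]
  exact ⟨Sum.inl i, rfl⟩

theorem exists_add_moveRight_inr (x y : PGame.{u}) (j : y.RightMoves) :
    ∃ k, (x + y).moveRight k = x + y.moveRight j := by
  rcases x with ⟨xl, xr, xL, xR⟩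
  rcases y with ⟨yl, yr, yL, yR⟩
  rw [mk_add_mk]
  exact ⟨Sum.inr j, rfl⟩

theorem add_le_add_right_aux (x : PGame.{u}) : ∀ y z : PGame.{u}, x ≤ y → x + z ≤ y + z := by
  refine WellFounded.induction wf_subsequent
    (C := fun x => ∀ y z : PGame.{u}, x ≤ y → x + z ≤ y + z) x ?_
  intro x IHx y
  refine WellFounded.induction wf_subsequent
    (C := fun y => ∀ z : PGame.{u}, x ≤ y → x + z ≤ y + z) y ?_
  intro y IHy z
  refine WellFounded.induction wf_subsequent (C := fun z => x ≤ y → x + z ≤ y + z) z ?_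
  intro z IHz h
  refine le_of_forall_lf (fun k => ?_) (fun k => ?_)
  · rcases add_moveLeft_cases k with ⟨i, hk⟩ | ⟨i, hk⟩
    · rw [hk]
      rcases lf_iff_exists_le.1 (moveLeft_lf_of_le h i) with ⟨i', hi'⟩ | ⟨j, hj⟩
      · obtain ⟨m, hm⟩ := exists_add_moveLeft_inl y z i'
        refine lf_of_le_moveLeft (i := m) ?_
        rw [hm]
        exact IHx _ (Subsequent.moveLeft x i) _ _ hi'
      · obtain ⟨m, hm⟩ := exists_add_moveRight_inl (x.moveLeft i) z j
        refine lf_of_moveRight_le (j := m) ?_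
        rw [hm]
        exact IHx _ (Relation.TransGen.head (IsOption.moveRight j) (Subsequent.moveLeft x i)) _ _ hj
    · rw [hk]
      obtain ⟨m, hm⟩ := exists_add_moveLeft_inr y z i
      refine lf_of_le_moveLeft (i := m) ?_
      rw [hm]
      exact IHz _ (Subsequent.moveLeft z i) h
  · rcases add_moveRight_cases k with ⟨j, hk⟩ | ⟨j, hk⟩
    · rw [hk]
      rcases lf_iff_exists_le.1 (lf_moveRight_of_le h j) with ⟨i, hi⟩ | ⟨j', hj'⟩
      · obtain ⟨m, hm⟩ := exists_add_moveLeft_inl (y.moveRight j) z i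
        refine lf_of_le_moveLeft (i := m) ?_
        rw [hm]
        exact IHy _ (Relation.TransGen.head (IsOption.moveLeft i) (Subsequent.moveRight y j)) _ hi
      · obtain ⟨m, hm⟩ := exists_add_moveRight_inl x z j'
        refine lf_of_moveRight_le (j := m) ?_
        rw [hm]
        exact IHx _ (Subsequent.moveRight x j') _ _ hj'
    · rw [hk]
      obtain ⟨m, hm⟩ := exists_add_moveRight_inr x z j
      refine lf_of_moveRight_le (j := m) ?_
      rw [hm]
      exact IHz _ (Subsequent.moveRight z j) h

theorem add_comm_le (x y : PGame.{u}) : x + y ≤ y + x := by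
  induction x generalizing y with
  | mk xl xr xL xR IHxl IHxr =>
  induction y with
  | mk yl yr yL yR IHyl IHyr =>
  refine le_of_forall_lf (fun k => ?_) (fun k => ?_)
  · rcases add_moveLeft_cases k with ⟨i, hk⟩ | ⟨j, hk⟩
    · obtain ⟨m, hm⟩ := exists_add_moveLeft_inr (mk yl yr yL yR) (mk xl xr xL xR) i
      rw [hk]; refine lf_of_le_moveLeft (i := m) ?_; rw [hm]; exact IHxl i _
    · obtain ⟨m, hm⟩ := exists_add_moveLeft_inl (mk yl yr yL yR) (mk xl xr xL xR) j
      rw [hk]; refine lf_of_le_moveLeft (i := m) ?_; rw [hm]; exact IHyl j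
  · rcases add_moveRight_cases k with ⟨j, hk⟩ | ⟨i, hk⟩
    · obtain ⟨m, hm⟩ := exists_add_moveRight_inr (mk xl xr xL xR) (mk yl yr yL yR) j
      rw [hk]; refine lf_of_moveRight_le (j := m) ?_; rw [hm]; exact IHyr j
    · obtain ⟨m, hm⟩ := exists_add_moveRight_inl (mk xl xr xL xR) (mk yl yr yL yR) i
      rw [hk]; refine lf_of_moveRight_le (j := m) ?_; rw [hm]; exact IHxr i _

theorem add_comm_equiv (x y : PGame.{u}) : PGame.Equiv (x + y) (y + x) :=
  ⟨add_comm_le x y, add_comm_le y x⟩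

theorem add_assoc_le (x y z : PGame.{u}) : x + y + z ≤ x + (y + z) := by
  induction x generalizing y z with
  | mk xl xr xL xR IHx IHx' =>
  induction y generalizing z with
  | mk yl yr yL yR IHy IHy' =>
  induction z with
  | mk zl zr zL zR IHz IHz' =>
  refine le_of_forall_lf (fun k => ?_) (fun k => ?_)
  · rcases add_moveLeft_cases k with ⟨k1, hk⟩ | ⟨c, hk⟩
    · rcases add_moveLeft_cases k1 with ⟨a, hk1⟩ | ⟨b, hk1⟩
      · obtain ⟨m, hm⟩ := exists_add_moveLeft_inl (mk xl xr xL xR)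
          (mk yl yr yL yR + mk zl zr zL zR) a
        rw [hk, hk1]; refine lf_of_le_moveLeft (i := m) ?_; rw [hm]; exact IHx a _ _
      · obtain ⟨m1, hm1⟩ := exists_add_moveLeft_inl (mk yl yr yL yR) (mk zl zr zL zR) b
        obtain ⟨m, hm⟩ := exists_add_moveLeft_inr (mk xl xr xL xR)
          (mk yl yr yL yR + mk zl zr zL zR) m1
        rw [hk, hk1]; refine lf_of_le_moveLeft (i := m) ?_; rw [hm, hm1]; exact IHy b _
    · obtain ⟨m1, hm1⟩ := exists_add_moveLeft_inr (mk yl yr yL yR) (mk zl zr zL zR) c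
      obtain ⟨m, hm⟩ := exists_add_moveLeft_inr (mk xl xr xL xR)
        (mk yl yr yL yR + mk zl zr zL zR) m1
      rw [hk]; refine lf_of_le_moveLeft (i := m) ?_; rw [hm, hm1]; exact IHz c
  · rcases add_moveRight_cases k with ⟨a, hk⟩ | ⟨k1, hk⟩
    · obtain ⟨m1, hm1⟩ := exists_add_moveRight_inl (mk xl xr xL xR) (mk yl yr yL yR) a
      obtain ⟨m, hm⟩ := exists_add_moveRight_inl (mk xl xr xL xR + mk yl yr yL yR)
        (mk zl zr zL zR) m1
      rw [hk]; refine lf_of_moveRight_le (j := m) ?_; rw [hm, hm1]; exact IHx' a _ _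
    · rcases add_moveRight_cases k1 with ⟨b, hk1⟩ | ⟨c, hk1⟩
      · obtain ⟨m1, hm1⟩ := exists_add_moveRight_inr (mk xl xr xL xR) (mk yl yr yL yR) b
        obtain ⟨m, hm⟩ := exists_add_moveRight_inl (mk xl xr xL xR + mk yl yr yL yR)
          (mk zl zr zL zR) m1
        rw [hk, hk1]; refine lf_of_moveRight_le (j := m) ?_; rw [hm, hm1]; exact IHy' b _
      · obtain ⟨m, hm⟩ := exists_add_moveRight_inr (mk xl xr xL xR + mk yl yr yL yR)
          (mk zl zr zL zR) c
        rw [hk, hk1]; refine lf_of_moveRight_le (j := m) ?_; rw [hm]; exact IHz' c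

theorem add_assoc_equiv (x y z : PGame.{u}) : PGame.Equiv (x + y + z) (x + (y + z)) :=
  ⟨add_assoc_le x y z,
    le_trans (add_comm_le _ _) (le_trans (add_assoc_le y z x) (le_trans (add_comm_le _ _)
      (le_trans (add_assoc_le z x y) (add_comm_le _ _))))⟩

theorem add_le_add_right' {x y : PGame.{u}} (h : x ≤ y) (z : PGame.{u}) : x + z ≤ y + z :=
  add_le_add_right_aux x y z h

theorem add_le_add_left' {x y : PGame.{u}} (h : x ≤ y) (z : PGame.{u}) : z + x ≤ z + y :=
  le_trans (add_comm_le z x) (le_trans (add_le_add_right' h z) (add_comm_le y z))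

theorem add_congr {w x y z : PGame.{u}} (h₁ : PGame.Equiv w x) (h₂ : PGame.Equiv y z) :
    PGame.Equiv (w + y) (x + z) :=
  ⟨le_trans (add_le_add_right' h₁.1 y) (add_le_add_left' h₂.1 x),
    le_trans (add_le_add_right' h₁.2 z) (add_le_add_left' h₂.2 w)⟩

theorem zero_add_le (x : PGame.{u}) : 0 + x ≤ x ∧ x ≤ 0 + x := by
  induction x with
  | mk xl xr xL xR IHl IHr =>
  constructor
  · refine le_of_forall_lf (fun k => ?_) (fun j => ?_)
    · rcases add_moveLeft_cases k with ⟨i, _⟩ | ⟨i, hk⟩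
      · exact PEmpty.elim i
      · rw [hk]; exact lf_of_le_moveLeft (i := i) (IHl i).1
    · obtain ⟨m, hm⟩ := exists_add_moveRight_inr 0 (mk xl xr xL xR) j
      refine lf_of_moveRight_le (j := m) ?_; rw [hm]; exact (IHr j).1
  · refine le_of_forall_lf (fun i => ?_) (fun k => ?_)
    · obtain ⟨m, hm⟩ := exists_add_moveLeft_inr 0 (mk xl xr xL xR) i
      refine lf_of_le_moveLeft (i := m) ?_; rw [hm]; exact (IHl i).2
    · rcases add_moveRight_cases k with ⟨i, _⟩ | ⟨j, hk⟩
      · exact PEmpty.elim i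
      · rw [hk]; exact lf_of_moveRight_le (j := j) (IHr j).2

theorem zero_add_equiv (x : PGame.{u}) : PGame.Equiv (0 + x) x :=
  ⟨(zero_add_le x).1, (zero_add_le x).2⟩

theorem neg_mk (xl xr : Type u) (xL : xl → PGame.{u}) (xR : xr → PGame.{u}) :
    -(mk xl xr xL xR) = mk xr xl (fun j => -(xR j)) (fun i => -(xL i)) := rfl

theorem neg_le_neg_aux (x : PGame.{u}) : ∀ y : PGame.{u},
    (-y ≤ -x ↔ x ≤ y) ∧ (-x ≤ -y ↔ y ≤ x) := by
  induction x with
  | mk xl xr xL xR IHxl IHxr =>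
  intro y
  induction y with
  | mk yl yr yL yR IHyl IHyr =>
  refine ⟨(le_iff_forall_lf.trans (and_comm.trans (and_congr ?_ ?_))).trans le_iff_forall_lf.symm,
    (le_iff_forall_lf.trans (and_comm.trans (and_congr ?_ ?_))).trans le_iff_forall_lf.symm⟩
  · exact forall_congr' fun j => not_congr (IHxl j _).2
  · exact forall_congr' fun i => not_congr (IHyr i).2
  · exact forall_congr' fun j => not_congr (IHyl j).1
  · exact forall_congr' fun i => not_congr (IHxr i _).1

theorem neg_congr {x y : PGame.{u}} (h : PGame.Equiv x y) : PGame.Equiv (-x) (-y) :=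
  ⟨(neg_le_neg_aux y x).1.2 h.2, (neg_le_neg_aux x y).1.2 h.1⟩

theorem add_neg_le (x : PGame.{u}) : x + -x ≤ 0 ∧ 0 ≤ x + -x := by
  induction x with
  | mk xl xr xL xR IHl IHr =>
  constructor
  · refine le_of_forall_lf (fun k => ?_) (fun j => PEmpty.elim j)
    rcases add_moveLeft_cases k with ⟨i, hk⟩ | ⟨j, hk⟩
    · rw [hk]
      obtain ⟨m, hm⟩ := exists_add_moveRight_inr ((mk xl xr xL xR).moveLeft i)
        (-(mk xl xr xL xR)) i
      refine lf_of_moveRight_le (j := m) ?_; rw [hm]; exact (IHl i).1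
    · rw [hk]
      obtain ⟨m, hm⟩ := exists_add_moveRight_inl (mk xl xr xL xR)
        ((-(mk xl xr xL xR)).moveLeft j) j
      refine lf_of_moveRight_le (j := m) ?_; rw [hm]; exact (IHr j).1
  · refine zero_le_lf.2 fun k => ?_
    rcases add_moveRight_cases k with ⟨i, hk⟩ | ⟨j, hk⟩
    · rw [hk]
      obtain ⟨m, hm⟩ := exists_add_moveLeft_inr ((mk xl xr xL xR).moveRight i)
        (-(mk xl xr xL xR)) i
      refine lf_of_le_moveLeft (i := m) ?_; rw [hm]; exact (IHr i).2
    · rw [hk]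
      obtain ⟨m, hm⟩ := exists_add_moveLeft_inl (mk xl xr xL xR)
        ((-(mk xl xr xL xR)).moveRight j) j
      refine lf_of_le_moveLeft (i := m) ?_; rw [hm]; exact (IHl j).2

theorem neg_add_equiv (x : PGame.{u}) : PGame.Equiv (-x + x) 0 :=
  ⟨le_trans (add_comm_le _ _) (add_neg_le x).1, le_trans (add_neg_le x).2 (add_comm_le _ _)⟩

theorem neg_zero' : -(0 : PGame.{u}) = 0 := by
  show mk PEmpty PEmpty (fun i => -(PEmpty.elim i : PGame.{u})) (fun i => -(PEmpty.elim i : PGame.{u}))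
    = mk PEmpty PEmpty PEmpty.elim PEmpty.elim
  congr 1 <;> funext i <;> exact i.elim

theorem neg_star : -star.{u} = star := by
  show mk PUnit PUnit (fun _ => -(0 : PGame.{u})) (fun _ => -(0 : PGame.{u})) =
    mk PUnit PUnit (fun _ => 0) (fun _ => 0)
  rw [neg_zero']

end PGame

abbrev Game : Type (u + 1) := Quotient PGame.setoid.{u}

namespace Game

instance : Zero Game.{u} := ⟨⟦(0 : PGame.{u})⟧⟩

instance : Add Game.{u} :=
  ⟨Quotient.map₂ (· + ·) (by intro _ _ hx _ _ hy; exact PGame.add_congr hx hy)⟩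

instance : Neg Game.{u} :=
  ⟨Quotient.map Neg.neg (by intro _ _ h; exact PGame.neg_congr h)⟩

instance : AddCommGroup Game.{u} where
  add_assoc := by rintro ⟨x⟩ ⟨y⟩ ⟨z⟩; exact Quot.sound (PGame.add_assoc_equiv x y z)
  zero_add := by rintro ⟨x⟩; exact Quot.sound (PGame.zero_add_equiv x)
  add_zero := by
    rintro ⟨x⟩; exact Quot.sound ((PGame.add_comm_equiv x 0).trans (PGame.zero_add_equiv x))
  add_comm := by rintro ⟨x⟩ ⟨y⟩; exact Quot.sound (PGame.add_comm_equiv x y)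
  neg_add_cancel := by rintro ⟨x⟩; exact Quot.sound (PGame.neg_add_equiv x)
  nsmul := nsmulRec
  zsmul := zsmulRec

def gameLe : Game.{u} → Game.{u} → Prop :=
  Quotient.lift₂ (fun x y : PGame.{u} => x ≤ y)
    (fun _ _ _ _ hx hy => propext (PGame.le_congr hx hy))

instance : LE Game.{u} := ⟨gameLe⟩

instance : LT Game.{u} := ⟨fun a b => gameLe a b ∧ ¬ gameLe b a⟩

instance : Preorder Game.{u} where
  lt_iff_le_not_ge := fun _ _ => Iff.rfl
  le_refl := by rintro ⟨x⟩; exact le_refl x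
  le_trans := by rintro ⟨x⟩ ⟨y⟩ ⟨z⟩; exact @le_trans _ _ x y z

instance : PartialOrder Game.{u} where
  le_antisymm := by
    rintro ⟨x⟩ ⟨y⟩ h₁ h₂; exact Quot.sound (show PGame.Equiv x y from ⟨h₁, h₂⟩)

instance : IsOrderedAddMonoid Game.{u} where
  add_le_add_left := by rintro ⟨a⟩ ⟨b⟩ h ⟨c⟩; exact PGame.add_le_add_right' (x := a) (y := b) h c

end Game

namespace PGame

@[simp] theorem quot_zero : (⟦(0 : PGame.{u})⟧ : Game) = 0 := rfl

@[simp] theorem quot_add (a b : PGame.{u}) : (⟦a + b⟧ : Game) = ⟦a⟧ + ⟦b⟧ := rfl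

@[simp] theorem quot_neg (a : PGame.{u}) : (⟦-a⟧ : Game) = -⟦a⟧ := rfl

@[simp] theorem quot_sub (a b : PGame.{u}) : (⟦a - b⟧ : Game) = ⟦a⟧ - ⟦b⟧ := rfl

theorem le_iff_game_le {x y : PGame.{u}} : x ≤ y ↔ (⟦x⟧ : Game) ≤ ⟦y⟧ := Iff.rfl

theorem lt_iff_game_lt {x y : PGame.{u}} : x < y ↔ (⟦x⟧ : Game) < ⟦y⟧ := Iff.rfl

theorem game_eq {x y : PGame.{u}} (h : PGame.Equiv x y) : (⟦x⟧ : Game) = ⟦y⟧ := Quot.sound h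

theorem nim_def (o : Ordinal.{u}) : nim o = mk o.ToType o.ToType
    (fun x => nim (Ordinal.ToType.toOrd x).1) (fun x => nim (Ordinal.ToType.toOrd x).1) := by
  rw [nim]

theorem nim_moveLeft_cases (o : Ordinal.{u}) (j : (nim o).LeftMoves) :
    ∃ a : Set.Iio o, (nim o).moveLeft j = nim a := by
  revert j; rw [nim_def o]; intro j; exact ⟨Ordinal.ToType.toOrd j, rfl⟩

theorem nim_moveRight_cases (o : Ordinal.{u}) (j : (nim o).RightMoves) :
    ∃ a : Set.Iio o, (nim o).moveRight j = nim a := by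
  revert j; rw [nim_def o]; intro j; exact ⟨Ordinal.ToType.toOrd j, rfl⟩

theorem exists_nim_moveLeft {o : Ordinal.{u}} (a : Set.Iio o) :
    ∃ j, (nim o).moveLeft j = nim a := by
  rw [nim_def o]
  refine ⟨Ordinal.ToType.mk a, ?_⟩
  show nim (Ordinal.ToType.mk.symm (Ordinal.ToType.mk a)).1 = nim a
  rw [OrderIso.symm_apply_apply]

theorem exists_nim_moveRight {o : Ordinal.{u}} (a : Set.Iio o) :
    ∃ j, (nim o).moveRight j = nim a := by
  rw [nim_def o]
  refine ⟨Ordinal.ToType.mk a, ?_⟩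
  show nim (Ordinal.ToType.mk.symm (Ordinal.ToType.mk a)).1 = nim a
  rw [OrderIso.symm_apply_apply]

theorem nim_zero_equiv : PGame.Equiv (nim (0 : Ordinal.{u})) 0 := by
  constructor
  · refine le_of_forall_lf (fun j => ?_) (fun j => PEmpty.elim j)
    obtain ⟨a, _⟩ := nim_moveLeft_cases 0 j
    exact absurd a.2 (by simp)
  · refine le_of_forall_lf (fun i => PEmpty.elim i) (fun j => ?_)
    obtain ⟨a, _⟩ := nim_moveRight_cases 0 j
    exact absurd a.2 (by simp)

theorem nim_one_equiv : PGame.Equiv (nim (1 : Ordinal.{u})) star := by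
  have h01 : (0 : Ordinal.{u}) < 1 := zero_lt_one
  obtain ⟨i0, hi0⟩ := exists_nim_moveLeft (o := 1) ⟨0, h01⟩
  obtain ⟨j0, hj0⟩ := exists_nim_moveRight (o := 1) ⟨0, h01⟩
  constructor
  · refine le_of_forall_lf (fun j => ?_) (fun j => ?_)
    · obtain ⟨a, ha⟩ := nim_moveLeft_cases 1 j
      have ha0 : (a : Ordinal) = 0 := Ordinal.lt_one_iff_zero.1 a.2
      rw [ha, ha0]
      exact lf_of_le_moveLeft (i := PUnit.unit) nim_zero_equiv.1
    · exact lf_of_moveRight_le (j := j0) (by rw [hj0]; exact nim_zero_equiv.1)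
  · refine le_of_forall_lf (fun j => ?_) (fun j => ?_)
    · exact lf_of_le_moveLeft (i := i0) (by rw [hi0]; exact nim_zero_equiv.2)
    · obtain ⟨a, ha⟩ := nim_moveRight_cases 1 j
      have ha0 : (a : Ordinal) = 0 := Ordinal.lt_one_iff_zero.1 a.2
      rw [ha, ha0]
      exact lf_of_moveRight_le (j := PUnit.unit) nim_zero_equiv.2

theorem neg_nim (o : Ordinal.{u}) : -nim o = nim o := by
  refine Ordinal.induction (p := fun o => -nim o = nim o) o ?_
  intro o IH
  rw [nim_def o, neg_mk]
  congr 1 <;> funext x <;> exact IH _ (Ordinal.ToType.toOrd x).2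

theorem nim_fuzzy_zero_of_ne_zero {o : Ordinal.{u}} (h : o ≠ 0) : nim o ⧏ 0 ∧ 0 ⧏ nim o := by
  have h0 : (0 : Ordinal) < o := pos_iff_ne_zero.2 h
  obtain ⟨i, hi⟩ := exists_nim_moveLeft (o := o) ⟨0, h0⟩
  obtain ⟨j, hj⟩ := exists_nim_moveRight (o := o) ⟨0, h0⟩
  refine ⟨lf_of_moveRight_le (j := j) ?_, lf_of_le_moveLeft (i := i) ?_⟩
  · rw [hj]; exact nim_zero_equiv.1
  · rw [hi]; exact nim_zero_equiv.2

end PGame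

end SetTheory

lemma zero_le_up : (0 : PGame.{u}) ≤ up := by
  rw [zero_le_lf]
  intro j
  exact star_fuzzy_zero.2

lemma zero_lf_nim_add_up (o : Ordinal.{u}) : 0 ⧏ nim o + up := by
  rw [zero_lf_le]
  rcases eq_or_ne o 0 with h | h
  · obtain ⟨k, hk⟩ := exists_add_moveLeft_inr (nim o) up PUnit.unit
    refine ⟨k, ?_⟩
    rw [hk]
    show 0 ≤ nim o + 0
    rw [le_iff_game_le]
    simp [h, game_eq nim_zero_equiv]
  · obtain ⟨j, hj⟩ := exists_nim_moveLeft (o := o) ⟨0, pos_iff_ne_zero.2 h⟩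
    obtain ⟨k, hk⟩ := exists_add_moveLeft_inl (nim o) up j
    refine ⟨k, ?_⟩
    rw [hk, hj]
    rw [le_iff_game_le]
    simpa [game_eq nim_zero_equiv] using (le_iff_game_le.1 zero_le_up)

lemma star_add_star_game : (⟦star⟧ : Game) + ⟦star⟧ = 0 := by
  nth_rewrite 2 [show (⟦star⟧ : Game) = -⟦star⟧ by rw [← quot_neg, neg_star]]
  exact add_neg_cancel _

lemma zero_le_nim_add_up {o : Ordinal.{u}} (h : o ≠ 1) : 0 ≤ nim o + up := by
  rw [zero_le_lf]
  intro j
  rcases add_moveRight_cases j with ⟨i, hi⟩ | ⟨i, hi⟩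
  · obtain ⟨a, ha⟩ := nim_moveRight_cases o i
    rw [hi, ha]
    exact zero_lf_nim_add_up _
  · rw [hi]
    show 0 ⧏ nim o + star
    rcases eq_or_ne o 0 with h0 | h0
    · subst h0
      rw [lf_congr_right (PGame.Equiv.trans (add_congr nim_zero_equiv (equiv_refl star)) (zero_add_equiv star))]
      exact star_fuzzy_zero.2
    · have h1 : (1 : Ordinal) < o :=
        lt_of_le_of_ne (Ordinal.one_le_iff_ne_zero.2 h0) (Ne.symm h)
      rw [zero_lf_le]
      obtain ⟨j', hj'⟩ := exists_nim_moveLeft (o := o) ⟨1, h1⟩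
      obtain ⟨k, hk⟩ := exists_add_moveLeft_inl (nim o) star j'
      refine ⟨k, ?_⟩
      rw [hk, hj']
      rw [le_iff_game_le]
      simp [game_eq nim_one_equiv, star_add_star_game]

lemma quot_nUp (k : ℕ) : (⟦nUp k⟧ : Game) = k • (⟦up⟧ : Game) := by
  induction k with
  | zero => simp [nUp]
  | succ n ih => simp [nUp, ih, succ_nsmul]

/-- for an all-small game `G` with atomic weight `w`:
`w ≥ 2` implies `G` is a Left win, `w ≥ 1` implies Left wins moving first,
`w ≤ -1` implies Right wins moving first, `w ≤ -2` implies `G` is a Right win. -/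
theorem atomicWeight_outcomes (G : PGame) (hG : AllSmall G) (w : ℤ)
    (hw : HasIntAtomicWeight G w) :
    (2 ≤ w → 0 < G) ∧ (1 ≤ w → 0 ⧏ G) ∧ (w ≤ -1 → G ⧏ 0) ∧ (w ≤ -2 → G < 0) := by
  obtain ⟨N₀, hspec⟩ := hw
  obtain ⟨h1, h2⟩ := hspec (max N₀ 2) (le_max_left _ _)
  set N : ℕ := max N₀ 2 with hN
  have hNne0 : ((N : Ordinal)) ≠ 0 := by
    have : N ≠ 0 := by omega
    simpa using this
  have hNne1 : ((N : Ordinal)) ≠ 1 := by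
    have : N ≠ 1 := by omega
    simpa using this
  have hu0 : (0 : Game) ≤ ⟦up⟧ := le_iff_game_le.1 zero_le_up
  have hsu : (0 : Game) ≤ ⟦nim (N : Ordinal)⟧ + ⟦up⟧ := by
    simpa using le_iff_game_le.1 (zero_le_nim_add_up hNne1)
  have hfz := nim_fuzzy_zero_of_ne_zero hNne0
  have hs_nle : ¬ (⟦nim (N : Ordinal)⟧ : Game) ≤ 0 := by
    rw [← quot_zero, ← le_iff_game_le]
    exact PGame.not_le.2 hfz.2
  have hs_nge : ¬ (0 : Game) ≤ ⟦nim (N : Ordinal)⟧ := by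
    rw [← quot_zero, ← le_iff_game_le]
    exact PGame.not_le.2 hfz.1
  have g1 : (⟦nim (N : Ordinal)⟧ : Game) - ⟦up⟧ < ⟦G⟧ - ⟦upMul w⟧ := by
    have := lt_iff_game_lt.1 h1
    simpa [sub_eq_add_neg] using this
  have g2 : (⟦G⟧ : Game) - ⟦upMul w⟧ < ⟦nim (N : Ordinal)⟧ + ⟦up⟧ := by
    have := lt_iff_game_lt.1 h2
    simpa [sub_eq_add_neg] using this
  refine ⟨?_, ?_, ?_, ?_⟩ <;> intro hwle
  · -- 2 ≤ w → 0 < G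
    obtain ⟨k, rfl⟩ : ∃ k : ℕ, w = (k : ℤ) + 2 := ⟨(w - 2).toNat, by omega⟩
    have hm : (⟦upMul ((k : ℤ) + 2)⟧ : Game) = (k + 2) • (⟦up⟧ : Game) := by
      have he : ((k : ℤ) + 2) = Int.ofNat (k + 2) := by simp [Int.ofNat_eq_natCast]
      rw [he]
      exact quot_nUp (k + 2)
    have key : (0 : Game) ≤ ⟦nim (N : Ordinal)⟧ - ⟦up⟧ + ⟦upMul ((k : ℤ) + 2)⟧ := by
      rw [hm]
      have h' : (⟦nim (N : Ordinal)⟧ : Game) - ⟦up⟧ + (k + 2) • (⟦up⟧ : Game)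
          = (⟦nim (N : Ordinal)⟧ + ⟦up⟧) + k • (⟦up⟧ : Game) := by
        rw [add_nsmul, two_nsmul]; abel
      rw [h']
      exact add_nonneg hsu (nsmul_nonneg hu0 k)
    rw [lt_iff_game_lt]
    calc (⟦(0 : PGame)⟧ : Game) = 0 := quot_zero
      _ ≤ ⟦nim (N : Ordinal)⟧ - ⟦up⟧ + ⟦upMul ((k : ℤ) + 2)⟧ := key
      _ < ⟦G⟧ - ⟦upMul ((k : ℤ) + 2)⟧ + ⟦upMul ((k : ℤ) + 2)⟧ := add_lt_add_left g1 _
      _ = ⟦G⟧ := by abel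
  · -- 1 ≤ w → 0 ⧏ G
    obtain ⟨k, rfl⟩ : ∃ k : ℕ, w = (k : ℤ) + 1 := ⟨(w - 1).toNat, by omega⟩
    have hm : (⟦upMul ((k : ℤ) + 1)⟧ : Game) = (k + 1) • (⟦up⟧ : Game) := by
      have he : ((k : ℤ) + 1) = Int.ofNat (k + 1) := by simp [Int.ofNat_eq_natCast]
      rw [he]
      exact quot_nUp (k + 1)
    rw [← PGame.not_le]
    intro hle
    rw [le_iff_game_le, quot_zero] at hle
    apply hs_nle
    have h3 : (⟦nim (N : Ordinal)⟧ : Game) + k • (⟦up⟧ : Game) < ⟦G⟧ := by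
      have h' : (⟦nim (N : Ordinal)⟧ : Game) + k • (⟦up⟧ : Game)
          = ⟦nim (N : Ordinal)⟧ - ⟦up⟧ + ⟦upMul ((k : ℤ) + 1)⟧ := by
        rw [hm, succ_nsmul]; abel
      calc (⟦nim (N : Ordinal)⟧ : Game) + k • (⟦up⟧ : Game)
          = ⟦nim (N : Ordinal)⟧ - ⟦up⟧ + ⟦upMul ((k : ℤ) + 1)⟧ := h'
        _ < ⟦G⟧ - ⟦upMul ((k : ℤ) + 1)⟧ + ⟦upMul ((k : ℤ) + 1)⟧ := add_lt_add_left g1 _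
        _ = ⟦G⟧ := by abel
    have h4 : (⟦nim (N : Ordinal)⟧ : Game) ≤ ⟦nim (N : Ordinal)⟧ + k • (⟦up⟧ : Game) :=
      le_add_of_nonneg_right (nsmul_nonneg hu0 k)
    exact le_of_lt (lt_of_le_of_lt h4 (lt_of_lt_of_le h3 hle))
  · -- w ≤ -1 → G ⧏ 0
    obtain ⟨k, rfl⟩ : ∃ k : ℕ, w = Int.negSucc k := ⟨(-w - 1).toNat, by rw [Int.negSucc_eq]; omega⟩
    have hm : (⟦upMul (Int.negSucc k)⟧ : Game) = -((k + 1) • (⟦up⟧ : Game)) := by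
      show (⟦-(nUp (k + 1))⟧ : Game) = _
      rw [quot_neg, quot_nUp]
    rw [← PGame.not_le]
    intro hge
    rw [le_iff_game_le, quot_zero] at hge
    apply hs_nge
    have h3 : (⟦G⟧ : Game) < ⟦nim (N : Ordinal)⟧ - k • (⟦up⟧ : Game) := by
      have h' : (⟦nim (N : Ordinal)⟧ : Game) + ⟦up⟧ + ⟦upMul (Int.negSucc k)⟧
          = ⟦nim (N : Ordinal)⟧ - k • (⟦up⟧ : Game) := by
        rw [hm, succ_nsmul]; abel
      calc (⟦G⟧ : Game) = ⟦G⟧ - ⟦upMul (Int.negSucc k)⟧ + ⟦upMul (Int.negSucc k)⟧ := by abel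
        _ < ⟦nim (N : Ordinal)⟧ + ⟦up⟧ + ⟦upMul (Int.negSucc k)⟧ := add_lt_add_left g2 _
        _ = ⟦nim (N : Ordinal)⟧ - k • (⟦up⟧ : Game) := h'
    have h4 : (⟦nim (N : Ordinal)⟧ : Game) - k • (⟦up⟧ : Game) ≤ ⟦nim (N : Ordinal)⟧ :=
      sub_le_self _ (nsmul_nonneg hu0 k)
    exact le_of_lt (lt_of_le_of_lt hge (lt_of_lt_of_le h3 h4))
  · -- w ≤ -2 → G < 0
    obtain ⟨k, rfl⟩ : ∃ k : ℕ, w = Int.negSucc (k + 1) :=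
      ⟨(-w - 2).toNat, by rw [Int.negSucc_eq]; omega⟩
    have hm : (⟦upMul (Int.negSucc (k + 1))⟧ : Game) = -((k + 2) • (⟦up⟧ : Game)) := by
      show (⟦-(nUp (k + 2))⟧ : Game) = _
      rw [quot_neg, quot_nUp]
    have hnegs : -(⟦nim (N : Ordinal)⟧ : Game) = ⟦nim (N : Ordinal)⟧ := by
      rw [← quot_neg, neg_nim]
    have h3 : (⟦G⟧ : Game) < ⟦nim (N : Ordinal)⟧ + ⟦up⟧ + ⟦upMul (Int.negSucc (k + 1))⟧ := by
      calc (⟦G⟧ : Game) = ⟦G⟧ - ⟦upMul (Int.negSucc (k + 1))⟧ + ⟦upMul (Int.negSucc (k + 1))⟧ := by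
            abel
        _ < _ := add_lt_add_left g2 _
    have h6 : (⟦nim (N : Ordinal)⟧ : Game) + ⟦up⟧ + ⟦upMul (Int.negSucc (k + 1))⟧ ≤ 0 := by
      rw [← neg_nonneg]
      have h5 : -((⟦nim (N : Ordinal)⟧ : Game) + ⟦up⟧ + ⟦upMul (Int.negSucc (k + 1))⟧)
          = k • (⟦up⟧ : Game) + (⟦up⟧ + -⟦nim (N : Ordinal)⟧) := by
        rw [hm, add_nsmul, two_nsmul]; abel
      rw [h5, hnegs]
      exact add_nonneg (nsmul_nonneg hu0 k) (by rw [add_comm]; exact hsu)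
    rw [lt_iff_game_lt]
    calc (⟦G⟧ : Game) < _ := h3
      _ ≤ 0 := h6
      _ = ⟦(0 : PGame)⟧ := quot_zero.symm
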